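/- For every perfect matching M on a set P of n points in the plane in convex position (and in general position), there exists a sequence of at most n/2 − 1 flips transforming M into a plane perfect matching; that is, f(M) ≤ n/2 − 1. -/

import Mathlib

open EuclideanGeometry Real

noncomputable section

/-- Points of the Euclidean plane. -/
abbrev Pt : Type := EuclideanSpace ℝ (Fin 2)

/-- Two closed segments `ab` and `cd` on four distinct points *cross* if their open
segments have a common point. -/
def SegCross (a b c d : Pt) : Prop :=
  a ≠ b ∧ a ≠ c ∧ a ≠ d ∧ b ≠ c ∧ b ≠ d ∧ c ≠ d ∧
    (openSegment ℝ a b ∩ openSegment ℝ c d).Nonempty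

/-- `M` is a perfect matching on the point set `P`: a set of non-degenerate unordered
pairs (edges) of points of `P` such that every point of `P` lies in exactly one edge. -/
def IsPM (P : Finset Pt) (M : Set (Sym2 Pt)) : Prop :=
  (∀ e ∈ M, ¬ e.IsDiag) ∧
  (∀ e ∈ M, ∀ p ∈ e, p ∈ P) ∧
  (∀ p ∈ P, ∃! e, e ∈ M ∧ p ∈ e)

/-- Two unordered edges cross. -/
def EdgeCross (e f : Sym2 Pt) : Prop :=
  ∃ a b c d : Pt, e = s(a, b) ∧ f = s(c, d) ∧ SegCross a b c d

/-- A matching is plane if no two of its edges cross. -/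
def PlaneM (M : Set (Sym2 Pt)) : Prop :=
  ∀ e ∈ M, ∀ f ∈ M, ¬ EdgeCross e f

/-- `M'` is obtained from `M` by a single flip: two crossing edges `{a,b}`, `{c,d}`
are replaced by `{a,c}`, `{b,d}` or by `{a,d}`, `{b,c}`. -/
def Flip (M M' : Set (Sym2 Pt)) : Prop :=
  ∃ a b c d : Pt, s(a, b) ∈ M ∧ s(c, d) ∈ M ∧ SegCross a b c d ∧
    (M' = (M \ {s(a, b), s(c, d)}) ∪ {s(a, c), s(b, d)} ∨
     M' = (M \ {s(a, b), s(c, d)}) ∪ {s(a, d), s(b, c)})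

/-- `M` can be transformed into a plane matching by at most `k` flips. -/
def FlipsToPlane (M : Set (Sym2 Pt)) (k : ℕ) : Prop :=
  ∃ (j : ℕ) (g : ℕ → Set (Sym2 Pt)), j ≤ k ∧ g 0 = M ∧
    (∀ i < j, Flip (g i) (g (i + 1))) ∧ PlaneM (g j)

/-- No three distinct points of `P` are collinear. -/
def GenPos (P : Set Pt) : Prop :=
  ∀ p ∈ P, ∀ q ∈ P, ∀ r ∈ P, p ≠ q → p ≠ r → q ≠ r →
    ¬ Collinear ℝ ({p, q, r} : Set Pt)

/-- `P` is in convex position: no point lies in the convex hull of the others. -/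
def ConvexPos (P : Set Pt) : Prop :=
  ∀ p ∈ P, p ∉ convexHull ℝ (P \ {p})

/-!
Induction on the number of points. Take an edge `ab` of `M` with the fewest points strictly to
its left, and let `ac` be the edge of the convex hull leaving `a` on that side. If `c = b`, the
hull edge `ab` crosses nothing and we recurse on the other points. Otherwise the partner `d` of
`c` lies to the right of `ab`, so `ab` and `cd` cross; flipping them to `ac`, `bd` creates the
hull edge `ac`, and the remaining `n - 2` points need at most `n/2 - 2` further flips.
-/

open scoped Classical

-- positive iff `x` lies to the left of the directed line `ab`
def orient (a b x : Pt) : ℝ :=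
  (b 0 - a 0) * (x 1 - a 1) - (b 1 - a 1) * (x 0 - a 0)

@[simp] lemma orient_self_left (a b : Pt) : orient a b a = 0 := by simp [orient]

@[simp] lemma orient_self_right (a b : Pt) : orient a b b = 0 := by simp only [orient]; ring

lemma orient_anticomm (a b x : Pt) : orient b a x = -orient a b x := by simp only [orient]; ring

lemma orient_anticomm_right (a b x : Pt) : orient a x b = -orient a b x := by
  simp only [orient]; ring

lemma orient_lineMap (p q u v : Pt) (t : ℝ) :
    orient p q ((1 - t) • u + t • v) = (1 - t) * orient p q u + t * orient p q v := by
  simp only [orient, PiLp.add_apply, PiLp.smul_apply, smul_eq_mul]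
  ring

lemma orient_openSegment {p q u v z : Pt} (hz : z ∈ openSegment ℝ u v) :
    ∃ t : ℝ, 0 < t ∧ t < 1 ∧ orient p q z = (1 - t) * orient p q u + t * orient p q v := by
  obtain ⟨α, t, hα, ht, hαt, rfl⟩ := hz
  obtain rfl : α = 1 - t := by linarith
  exact ⟨t, ht, by linarith, orient_lineMap p q u v t⟩

lemma sub_coord_ne_zero_of_ne {a b : Pt} (h : a ≠ b) : b 0 - a 0 ≠ 0 ∨ b 1 - a 1 ≠ 0 := by
  by_contra! hc
  exact h (by ext i; fin_cases i <;> simp only [Fin.zero_eta, Fin.mk_one] <;> linarith)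

lemma exists_eq_lineMap_of_orient_eq_zero {p q x : Pt} (hpq : p ≠ q) (h : orient p q x = 0) :
    ∃ s : ℝ, x = (1 - s) • p + s • q := by
  unfold orient at h
  rcases sub_coord_ne_zero_of_ne hpq with h0 | h1
  · refine ⟨(x 0 - p 0) / (q 0 - p 0), ?_⟩
    ext i; fin_cases i <;>
      simp only [Fin.zero_eta, Fin.mk_one, PiLp.add_apply, PiLp.smul_apply, smul_eq_mul]
    · field_simp; ring
    · field_simp; linear_combination h
  · refine ⟨(x 1 - p 1) / (q 1 - p 1), ?_⟩
    ext i; fin_cases i <;>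
      simp only [Fin.zero_eta, Fin.mk_one, PiLp.add_apply, PiLp.smul_apply, smul_eq_mul]
    · field_simp; linear_combination -h
    · field_simp; ring

lemma collinear_of_orient_eq_zero {p q x : Pt} (hpq : p ≠ q) (h : orient p q x = 0) :
    Collinear ℝ ({p, q, x} : Set Pt) := by
  obtain ⟨s, rfl⟩ := exists_eq_lineMap_of_orient_eq_zero hpq h
  rw [collinear_iff_of_mem (Set.mem_insert p _)]
  refine ⟨q - p, ?_⟩
  rintro y (rfl | rfl | rfl)
  · exact ⟨0, by simp⟩
  · exact ⟨1, by simp⟩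
  · exact ⟨s, by rw [vadd_eq_add]; module⟩

lemma GenPos.orient_ne_zero {P : Set Pt} (hgp : GenPos P) {p q x : Pt}
    (hp : p ∈ P) (hq : q ∈ P) (hx : x ∈ P) (hpq : p ≠ q) (hpx : p ≠ x) (hqx : q ≠ x) :
    orient p q x ≠ 0 :=
  fun h => hgp p hp q hq x hx hpq hpx hqx (collinear_of_orient_eq_zero hpq h)

lemma ConvexPos.mono {S T : Set Pt} (hT : ConvexPos T) (h : S ⊆ T) : ConvexPos S :=
  fun p hp hmem => hT p (h hp) (convexHull_mono (Set.sdiff_subset_sdiff_left h) hmem)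

lemma ConvexPos.notMem_segment {P : Set Pt} (hcv : ConvexPos P) {p x y : Pt} (hp : p ∈ P)
    (hx : x ∈ convexHull ℝ (P \ {p})) (hy : y ∈ convexHull ℝ (P \ {p})) :
    p ∉ segment ℝ x y :=
  fun h => hcv p hp ((convex_convexHull ℝ _).segment_subset hx hy h)

lemma ConvexPos.genPos {P : Set Pt} (hcv : ConvexPos P) : GenPos P := by
  intro p hp q hq r hr hpq hpr hqr hcol
  have hull {x y : Pt} (hx : x ∈ P) (hy : y ∈ P) (hxy : x ≠ y) : x ∈ convexHull ℝ (P \ {y}) :=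
    subset_convexHull ℝ _ ⟨hx, hxy⟩
  rcases hcol.wbtw_or_wbtw_or_wbtw with h | h | h
  · exact hcv.notMem_segment hq (hull hp hq hpq) (hull hr hq hqr.symm) h.mem_segment
  · exact hcv.notMem_segment hr (hull hq hr hqr) (hull hp hr hpr) h.mem_segment
  · exact hcv.notMem_segment hp (hull hr hp hpr.symm) (hull hq hp hpq.symm) h.mem_segment

lemma ConvexPos.pos_of_eq_lineMap {P : Set Pt} (hcv : ConvexPos P) {p q z : Pt} {s : ℝ}
    (hp : p ∈ P) (hq : q ∈ P) (hpq : p ≠ q) (hz : z = (1 - s) • p + s • q)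
    (hzp : z ∈ convexHull ℝ (P \ {p})) : 0 < s := by
  by_contra! hs
  refine hcv.notMem_segment hp hzp (subset_convexHull ℝ _ ⟨hq, hpq.symm⟩) ?_
  have h1s : (1 : ℝ) - s ≠ 0 := by linarith
  refine ⟨1 / (1 - s), -s / (1 - s), div_nonneg zero_le_one (by linarith),
    div_nonneg (by linarith) (by linarith), by field_simp; ring, ?_⟩
  rw [hz]
  match_scalars
  · field_simp
  · field_simp; ring

lemma ConvexPos.openSegment_inter_nonempty {P : Set Pt} (hcv : ConvexPos P) {p q u v : Pt}
    (hp : p ∈ P) (hq : q ∈ P) (hu : u ∈ P) (hv : v ∈ P)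
    (hu0 : 0 < orient p q u) (hv0 : orient p q v < 0) :
    (openSegment ℝ p q ∩ openSegment ℝ u v).Nonempty := by
  have hpq : p ≠ q := by rintro rfl; simp [orient] at hu0
  have hmem {x w : Pt} (hx : x ∈ P) (h : orient p q x ≠ 0) (hw : w ∈ ({p, q} : Set Pt)) :
      x ∈ P \ {w} :=
    ⟨hx, by rintro rfl; rcases hw with rfl | rfl <;> simp at h⟩
  set t := orient p q u / (orient p q u - orient p q v) with ht
  have hden : 0 < orient p q u - orient p q v := by linarith
  set z : Pt := (1 - t) • u + t • v with hz
  have hzuv : z ∈ openSegment ℝ u v :=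
    ⟨1 - t, t, by rw [ht, sub_pos, div_lt_one hden]; linarith, div_pos hu0 hden, by ring, rfl⟩
  have hz0 : orient p q z = 0 := by
    rw [hz, orient_lineMap, ht]
    field_simp
    ring
  obtain ⟨s, hs⟩ := exists_eq_lineMap_of_orient_eq_zero hpq hz0
  have hzhull {w : Pt} (hw : w ∈ ({p, q} : Set Pt)) : z ∈ convexHull ℝ (P \ {w}) :=
    segment_subset_convexHull (hmem hu hu0.ne' hw) (hmem hv hv0.ne hw)
      (openSegment_subset_segment ℝ u v hzuv)
  have hs0 := hcv.pos_of_eq_lineMap hp hq hpq hs (hzhull (by simp))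
  have hs1 := hcv.pos_of_eq_lineMap hq hp hpq.symm (s := 1 - s) (by rw [hs]; module)
    (hzhull (by simp))
  exact ⟨z, ⟨1 - s, s, by linarith, hs0, by ring, hs.symm⟩, hzuv⟩

def leftOf (P : Finset Pt) (a b : Pt) : Finset Pt :=
  P.filter (0 < orient a b ·)

lemma GenPos.exists_forall_orient_neg {P : Finset Pt} (hgp : GenPos (P : Set Pt)) {a b : Pt}
    (ha : a ∈ P) (hab : a ≠ b) (hne : (leftOf P a b).Nonempty) :
    ∃ c ∈ leftOf P a b, ∀ x ∈ leftOf P a b, x ≠ c → orient a c x < 0 := by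
  -- `c` minimises the cotangent of the angle from `ab` to `ac`
  obtain ⟨c, hc, hmin⟩ := (leftOf P a b).exists_min_image
    (fun x => ((b 0 - a 0) * (x 0 - a 0) + (b 1 - a 1) * (x 1 - a 1)) / orient a b x) hne
  refine ⟨c, hc, fun x hx hxc => ?_⟩
  have hle := (div_le_div_iff₀ (Finset.mem_filter.mp hc).2 (Finset.mem_filter.mp hx).2).mp
    (hmin x hx)
  simp only [leftOf, Finset.mem_filter] at hc hx
  have key : ((b 0 - a 0) ^ 2 + (b 1 - a 1) ^ 2) * orient a c x =
      ((b 0 - a 0) * (c 0 - a 0) + (b 1 - a 1) * (c 1 - a 1)) * orient a b x -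
        ((b 0 - a 0) * (x 0 - a 0) + (b 1 - a 1) * (x 1 - a 1)) * orient a b c := by
    simp only [orient]; ring
  have hsq : 0 < (b 0 - a 0) ^ 2 + (b 1 - a 1) ^ 2 := by
    rcases sub_coord_ne_zero_of_ne hab with h | h <;> positivity
  have hne0 : orient a c x ≠ 0 := hgp.orient_ne_zero ha hc.1 hx.1
    (by rintro rfl; simp at hc) (by rintro rfl; simp at hx) hxc.symm
  refine lt_of_le_of_ne ?_ hne0
  nlinarith

lemma ConvexPos.orient_nonpos_of_pos_of_neg {P : Set Pt} (hcv : ConvexPos P) {a b c x : Pt}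
    (ha : a ∈ P) (hb : b ∈ P) (hc : c ∈ P) (hx : x ∈ P)
    (hc0 : 0 < orient a b c) (hx0 : orient a b x < 0) : orient a c x ≤ 0 := by
  by_contra! hpos
  obtain ⟨z, hzab, hzcx⟩ := hcv.openSegment_inter_nonempty ha hb hc hx hc0 hx0
  obtain ⟨t, ht0, -, h1⟩ := orient_openSegment (p := a) (q := c) hzab
  obtain ⟨t', ht0', -, h2⟩ := orient_openSegment (p := a) (q := c) hzcx
  rw [orient_self_left, orient_anticomm_right a b c] at h1
  rw [orient_self_right] at h2
  nlinarith

lemma ConvexPos.exists_hull_edge {P : Finset Pt} (hcv : ConvexPos (P : Set Pt)) {a b : Pt}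
    (ha : a ∈ P) (hb : b ∈ P) (hab : a ≠ b) :
    ∃ c ∈ P, (c = b ∨ 0 < orient a b c) ∧ ∀ x ∈ P, x ≠ a → x ≠ c → orient a c x < 0 := by
  have hgp := hcv.genPos
  have hsign : ∀ x ∈ P, x ≠ a → x ≠ b → x ∈ leftOf P a b ∨ orient a b x < 0 := by
    intro x hx hxa hxb
    rcases (hgp.orient_ne_zero ha hb hx hab hxa.symm hxb.symm).lt_or_gt with h | h
    · exact Or.inr h
    · exact Or.inl (Finset.mem_filter.mpr ⟨hx, h⟩)
  rcases (leftOf P a b).eq_empty_or_nonempty with hempty | hne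
  · refine ⟨b, hb, Or.inl rfl, fun x hx hxa hxb => ?_⟩
    exact (hsign x hx hxa hxb).resolve_left (by simp [hempty])
  obtain ⟨c, hc, hcmin⟩ := hgp.exists_forall_orient_neg ha hab hne
  obtain ⟨hcP, hc0⟩ := Finset.mem_filter.mp hc
  refine ⟨c, hcP, Or.inr hc0, fun x hx hxa hxc => ?_⟩
  rcases eq_or_ne x b with rfl | hxb
  · rw [orient_anticomm_right]; linarith
  rcases hsign x hx hxa hxb with hxl | hx0
  · exact hcmin x hxl hxc
  · exact (hcv.orient_nonpos_of_pos_of_neg ha hb hcP hx hc0 hx0).lt_of_ne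
      (hgp.orient_ne_zero ha hcP hx (by rintro rfl; simp at hc0) hxa.symm hxc.symm)

lemma ConvexPos.card_leftOf_lt {P : Finset Pt} (hcv : ConvexPos (P : Set Pt)) {a b c d : Pt}
    (ha : a ∈ P) (hc : c ∈ P) (hd : d ∈ P) (hc0 : 0 < orient a b c) (hd0 : 0 < orient a b d)
    (ha0 : orient c d a < 0) : (leftOf P c d).card < (leftOf P a b).card := by
  refine (Finset.card_le_card (t := (leftOf P a b).erase c) fun w hw => ?_).trans_lt
    (Finset.card_erase_lt_of_mem (Finset.mem_filter.mpr ⟨hc, hc0⟩))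
  obtain ⟨hwP, hw0⟩ := Finset.mem_filter.mp hw
  obtain ⟨z, hzcd, hzwa⟩ := hcv.openSegment_inter_nonempty hc hd hwP ha hw0 ha0
  obtain ⟨t, ht0, ht1, h1⟩ := orient_openSegment (p := a) (q := b) hzcd
  obtain ⟨t', -, ht1', h2⟩ := orient_openSegment (p := a) (q := b) hzwa
  rw [orient_self_left] at h2
  exact Finset.mem_erase.mpr ⟨by rintro rfl; simp at hw0, Finset.mem_filter.mpr ⟨hwP, by nlinarith⟩⟩

namespace IsPM

variable {P : Finset Pt} {M : Set (Sym2 Pt)}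

lemma left_mem (hM : IsPM P M) {a b : Pt} (h : s(a, b) ∈ M) : a ∈ P :=
  hM.2.1 _ h a (Sym2.mem_mk_left a b)

lemma right_mem (hM : IsPM P M) {a b : Pt} (h : s(a, b) ∈ M) : b ∈ P :=
  hM.2.1 _ h b (Sym2.mem_mk_right a b)

lemma ne_of_mem (hM : IsPM P M) {a b : Pt} (h : s(a, b) ∈ M) : a ≠ b :=
  fun hab => hM.1 _ h (Sym2.mk_isDiag_iff.mpr hab)

lemma eq_of_mem (hM : IsPM P M) {e f : Sym2 Pt} {p : Pt} (he : e ∈ M) (hf : f ∈ M)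
    (hpe : p ∈ e) (hpf : p ∈ f) : e = f :=
  (hM.2.2 p (hM.2.1 e he p hpe)).unique ⟨he, hpe⟩ ⟨hf, hpf⟩

lemma exists_partner (hM : IsPM P M) {p : Pt} (hp : p ∈ P) : ∃ q, s(p, q) ∈ M := by
  obtain ⟨e, ⟨he, hpe⟩, -⟩ := hM.2.2 p hp
  obtain ⟨q, rfl⟩ := Sym2.mem_iff_exists.mp hpe
  exact ⟨q, he⟩

lemma diff_edge (hM : IsPM P M) {a c : Pt} (hac : s(a, c) ∈ M) :
    IsPM ((P.erase a).erase c) (M \ {s(a, c)}) := by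
  refine ⟨fun e he => hM.1 e he.1, ?_, fun p hp => ?_⟩
  · rintro e ⟨he, hne⟩ p hpe
    have hpa : p ≠ a := by rintro rfl; exact hne (hM.eq_of_mem he hac hpe (Sym2.mem_mk_left _ _))
    have hpc : p ≠ c := by rintro rfl; exact hne (hM.eq_of_mem he hac hpe (Sym2.mem_mk_right _ _))
    simpa [hpa, hpc] using hM.2.1 e he p hpe
  · simp only [Finset.mem_erase] at hp
    obtain ⟨hpc, hpa, hpP⟩ := hp
    obtain ⟨e, ⟨he, hpe⟩, hu⟩ := hM.2.2 p hpP
    refine ⟨e, ⟨⟨he, ?_⟩, hpe⟩, fun f hf => hu f ⟨hf.1.1, hf.2⟩⟩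
    rintro rfl
    rcases Sym2.mem_iff.mp hpe with rfl | rfl
    exacts [hpa rfl, hpc rfl]

lemma insert_edge (hM : IsPM P M) {x y : Pt} (hx : x ∉ P) (hy : y ∉ P) (hxy : x ≠ y) :
    IsPM (insert x (insert y P)) (insert s(x, y) M) := by
  refine ⟨?_, ?_, fun p hp => ?_⟩
  · rintro e (rfl | he)
    exacts [fun h => hxy (Sym2.mk_isDiag_iff.mp h), hM.1 e he]
  · rintro e (rfl | he) p hpe
    · rcases Sym2.mem_iff.mp hpe with rfl | rfl <;> simp
    · simp [hM.2.1 e he p hpe]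
  have hnew {e : Sym2 Pt} (he : e ∈ M) : ¬ (x ∈ e ∨ y ∈ e) := by
    rintro (h | h)
    exacts [hx (hM.2.1 e he x h), hy (hM.2.1 e he y h)]
  rcases Finset.mem_insert.mp hp with rfl | hp'
  · exact ⟨_, ⟨Set.mem_insert _ _, Sym2.mem_mk_left _ _⟩, fun f ⟨hf, hpf⟩ =>
      hf.resolve_right fun hf => hnew hf (Or.inl hpf)⟩
  rcases Finset.mem_insert.mp hp' with rfl | hpP
  · exact ⟨_, ⟨Set.mem_insert _ _, Sym2.mem_mk_right _ _⟩, fun f ⟨hf, hpf⟩ =>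
      hf.resolve_right fun hf => hnew hf (Or.inr hpf)⟩
  obtain ⟨e, ⟨he, hpe⟩, hu⟩ := hM.2.2 p hpP
  refine ⟨e, ⟨Set.mem_insert_of_mem _ he, hpe⟩, ?_⟩
  rintro f ⟨rfl | hf, hpf⟩
  · rcases Sym2.mem_iff.mp hpf with rfl | rfl
    exacts [(hx hpP).elim, (hy hpP).elim]
  · exact hu f ⟨hf, hpf⟩

lemma exchange (hM : IsPM P M) {a b c d : Pt} (hab : s(a, b) ∈ M) (hcd : s(c, d) ∈ M)
    (hac : a ≠ c) (had : a ≠ d) (hbc : b ≠ c) (hbd : b ≠ d) :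
    IsPM P ((M \ {s(a, b), s(c, d)}) ∪ {s(a, c), s(b, d)}) := by
  have hcd' : s(c, d) ∈ M \ {s(a, b)} := ⟨hcd, by simp [hac.symm, had.symm]⟩
  have h := ((hM.diff_edge hab).diff_edge hcd').insert_edge (x := a) (y := c) (by simp)
    (by simp) hac |>.insert_edge (x := b) (y := d) (by simp [hbc, (hM.ne_of_mem hab).symm])
      (by simp [had.symm, (hM.ne_of_mem hcd).symm]) hbd
  convert h using 1
  · ext x
    simp only [Finset.mem_insert, Finset.mem_erase]
    constructor
    · tauto
    · rintro (rfl | rfl | rfl | rfl | ⟨-, -, -, -, hx⟩)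
      exacts [hM.right_mem hab, hM.right_mem hcd, hM.left_mem hab, hM.left_mem hcd, hx]
  · ext e
    simp only [Set.mem_union, Set.mem_sdiff, Set.mem_insert_iff, Set.mem_singleton_iff]
    tauto

lemma of_flip (hM : IsPM P M) {M' : Set (Sym2 Pt)} (h : Flip M M') : IsPM P M' := by
  obtain ⟨a, b, c, d, hab, hcd, ⟨-, hac, had, hbc, hbd, -, -⟩, rfl | rfl⟩ := h
  · exact hM.exchange hab hcd hac had hbc hbd
  · simpa only [Sym2.eq_swap (a := d)] using
      hM.exchange hab (Sym2.eq_swap ▸ hcd) had hac hbd hbc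

end IsPM

lemma SegCross.symm {a b c d : Pt} (h : SegCross a b c d) : SegCross c d a b := by
  obtain ⟨hab, hac, had, hbc, hbd, hcd, hne⟩ := h
  exact ⟨hcd, hac.symm, hbc.symm, had.symm, hbd.symm, hab, Set.inter_comm _ _ ▸ hne⟩

lemma EdgeCross.symm {e f : Sym2 Pt} (h : EdgeCross e f) : EdgeCross f e :=
  let ⟨a, b, c, d, he, hf, h⟩ := h
  ⟨c, d, a, b, hf, he, h.symm⟩

lemma not_edgeCross_self (e : Sym2 Pt) : ¬ EdgeCross e e := by
  rintro ⟨a, b, c, d, rfl, he, -, hac, had, -⟩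
  rcases Sym2.eq_iff.mp he with ⟨rfl, -⟩ | ⟨rfl, -⟩
  exacts [hac rfl, had rfl]

lemma PlaneM.insert {M : Set (Sym2 Pt)} {h : Sym2 Pt} (hM : PlaneM M)
    (hh : ∀ f ∈ M, ¬ EdgeCross h f) : PlaneM (insert h M) := by
  rintro e (rfl | he) f (rfl | hf) hef
  · exact not_edgeCross_self _ hef
  · exact hh f hf hef
  · exact hh e he hef.symm
  · exact hM e he f hf hef

lemma Flip.subset_sym2 {Q : Set Pt} {A B : Set (Sym2 Pt)} (hA : A ⊆ Q.sym2) (h : Flip A B) :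
    B ⊆ Q.sym2 := by
  obtain ⟨a, b, c, d, hab, hcd, -, rfl | rfl⟩ := h <;>
  · obtain ⟨ha, hb⟩ := Set.mk_mem_sym2_iff.mp (hA hab)
    obtain ⟨hc, hd⟩ := Set.mk_mem_sym2_iff.mp (hA hcd)
    exact Set.union_subset (Set.sdiff_subset.trans hA) (Set.pair_subset ⟨‹_›, ‹_›⟩ ⟨‹_›, ‹_›⟩)

lemma Flip.insert {A B : Set (Sym2 Pt)} {h : Sym2 Pt} (hh : h ∉ A) (hf : Flip A B) :
    Flip (insert h A) (insert h B) := by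
  obtain ⟨a, b, c, d, hab, hcd, hx, hB⟩ := hf
  refine ⟨a, b, c, d, Or.inr hab, Or.inr hcd, hx, ?_⟩
  have h1 : h ≠ s(a, b) := by rintro rfl; exact hh hab
  have h2 : h ≠ s(c, d) := by rintro rfl; exact hh hcd
  rcases hB with rfl | rfl <;> [left; right] <;>
  · ext e
    by_cases he : e = h <;> simp [he, h1, h2]

lemma PlaneM.flipsToPlane {M : Set (Sym2 Pt)} (hM : PlaneM M) (k : ℕ) : FlipsToPlane M k :=
  ⟨0, fun _ => M, k.zero_le, rfl, fun _ h => absurd h (Nat.not_lt_zero _), hM⟩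

namespace FlipsToPlane

variable {M : Set (Sym2 Pt)} {k : ℕ}

lemma mono (h : FlipsToPlane M k) {k' : ℕ} (hk : k ≤ k') : FlipsToPlane M k' :=
  let ⟨j, g, hj, h0, hflip, hplane⟩ := h
  ⟨j, g, hj.trans hk, h0, hflip, hplane⟩

lemma cons {M₁ : Set (Sym2 Pt)} (h : FlipsToPlane M₁ k) (hf : Flip M M₁) :
    FlipsToPlane M (k + 1) := by
  obtain ⟨j, g, hj, rfl, hflip, hplane⟩ := h
  refine ⟨j + 1, fun i => Nat.casesOn i M g, by omega, rfl, fun i hi => ?_, hplane⟩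
  cases i with
  | zero => exact hf
  | succ i => exact hflip i (by omega)

lemma insert {Q : Set Pt} {A : Set (Sym2 Pt)} {h : Sym2 Pt} (hA : A ⊆ Q.sym2) (hh : h ∉ Q.sym2)
    (hcross : ∀ f ∈ Q.sym2, ¬ EdgeCross h f) (hF : FlipsToPlane A k) :
    FlipsToPlane (insert h A) k := by
  obtain ⟨j, g, hj, rfl, hflip, hplane⟩ := hF
  have hsub : ∀ i ≤ j, g i ⊆ Q.sym2 := by
    intro i
    induction i with
    | zero => exact fun _ => hA
    | succ i ih => exact fun hi => (hflip i hi).subset_sym2 (ih (by omega))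
  exact ⟨j, fun i => Insert.insert h (g i), hj, rfl,
    fun i hi => (hflip i hi).insert fun hmem => hh (hsub i hi.le hmem),
    hplane.insert fun f hf => hcross f (hsub j le_rfl hf)⟩

end FlipsToPlane

lemma not_edgeCross_of_orient_neg {a c : Pt} :
    ∀ f ∈ {x | orient a c x < 0}.sym2, ¬ EdgeCross s(a, c) f := by
  rintro f hf ⟨x, y, u, v, hxy, rfl, -, -, -, -, -, -, z, hzxy, hzuv⟩
  have hxy0 : orient a c x = 0 ∧ orient a c y = 0 := by
    rcases Sym2.eq_iff.mp hxy with ⟨rfl, rfl⟩ | ⟨rfl, rfl⟩ <;> simp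
  obtain ⟨hu, hv⟩ : orient a c u < 0 ∧ orient a c v < 0 := Set.mk_mem_sym2_iff.mp hf
  obtain ⟨t, -, -, h1⟩ := orient_openSegment (p := a) (q := c) hzxy
  obtain ⟨t', ht0, ht1, h2⟩ := orient_openSegment (p := a) (q := c) hzuv
  rw [hxy0.1, hxy0.2] at h1
  nlinarith

lemma FlipsToPlane.of_hull_edge {P : Finset Pt} {M : Set (Sym2 Pt)} {a c : Pt} {k : ℕ}
    (hM : IsPM P M) (hac : s(a, c) ∈ M) (hside : ∀ x ∈ P, x ≠ a → x ≠ c → orient a c x < 0)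
    (h : FlipsToPlane (M \ {s(a, c)}) k) : FlipsToPlane M k := by
  have hsub : M \ {s(a, c)} ⊆ {x | orient a c x < 0}.sym2 := by
    refine fun e he => Set.mem_sym2_iff_subset.mpr fun p hp => ?_
    have hpP := (hM.diff_edge hac).2.1 e he p hp
    simp only [Finset.mem_erase] at hpP
    exact hside p hpP.2.2 hpP.2.1 hpP.1
  simpa [Set.insert_eq_of_mem hac] using h.insert hsub (by simp) not_edgeCross_of_orient_neg

lemma exists_mk_mem_forall_le {α : Type*} {M : Set (Sym2 α)} (hM : M.Nonempty)
    (f : α → α → ℕ) : ∃ a b, s(a, b) ∈ M ∧ ∀ x y, s(x, y) ∈ M → f a b ≤ f x y := by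
  obtain ⟨e, he⟩ := hM
  induction e using Sym2.ind with
  | _ x y =>
  have hex : ∃ n a b, s(a, b) ∈ M ∧ f a b = n := ⟨_, x, y, he, rfl⟩
  obtain ⟨a, b, hab, hn⟩ := Nat.find_spec hex
  exact ⟨a, b, hab, fun x y hxy => hn ▸ Nat.find_min' hex ⟨x, y, hxy, rfl⟩⟩

lemma ConvexPos.segCross_of_forall_card_le {P : Finset Pt} (hcv : ConvexPos (P : Set Pt))
    {M : Set (Sym2 Pt)} (hM : IsPM P M) {a b c d : Pt} (habM : s(a, b) ∈ M)
    (hcdM : s(c, d) ∈ M) (hc0 : 0 < orient a b c)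
    (hmin : ∀ x y, s(x, y) ∈ M → (leftOf P a b).card ≤ (leftOf P x y).card) :
    SegCross a b c d := by
  have hgp := hcv.genPos
  have haP := hM.left_mem habM
  have hcP := hM.left_mem hcdM
  have hdP := hM.right_mem hcdM
  have hca : c ≠ a := by rintro rfl; simp at hc0
  have hcb : c ≠ b := by rintro rfl; simp at hc0
  have hcd := hM.ne_of_mem hcdM
  have hd : d ∉ s(a, b) := fun hd => by
    have := hM.eq_of_mem hcdM habM (Sym2.mem_mk_right c d) hd ▸ Sym2.mem_mk_left c d
    rcases Sym2.mem_iff.mp this with h | h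
    exacts [hca h, hcb h]
  have hda : d ≠ a := fun h => hd (h ▸ Sym2.mem_mk_left _ _)
  have hdb : d ≠ b := fun h => hd (h ▸ Sym2.mem_mk_right _ _)
  -- otherwise one side of `cd` would be a proper subset of the left side of `ab`
  have hd0 : orient a b d < 0 := by
    refine (hgp.orient_ne_zero haP (hM.right_mem habM) hdP (hM.ne_of_mem habM) hda.symm
      hdb.symm).lt_of_le ?_
    by_contra! hd0
    rcases (hgp.orient_ne_zero hcP hdP haP hcd hca hda).lt_or_gt with h | h
    · exact (hcv.card_leftOf_lt haP hcP hdP hc0 hd0 h).not_ge (hmin c d hcdM)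
    · refine (hcv.card_leftOf_lt haP hdP hcP hd0 hc0 ?_).not_ge (hmin d c (Sym2.eq_swap ▸ hcdM))
      rw [orient_anticomm]; linarith
  obtain ⟨z, h1, h2⟩ := hcv.openSegment_inter_nonempty haP (hM.right_mem habM) hcP hdP hc0 hd0
  exact ⟨hM.ne_of_mem habM, hca.symm, hda.symm, hcb.symm, hdb.symm, hcd, z, h1, h2⟩

theorem flipsToPlane_of_convexPos (P : Finset Pt) (hcv : ConvexPos (P : Set Pt))
    {M : Set (Sym2 Pt)} (hM : IsPM P M) : FlipsToPlane M (P.card / 2 - 1) := by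
  induction P using Finset.strongInduction generalizing M with
  | H P ih =>
  rcases M.eq_empty_or_nonempty with rfl | hne
  · exact PlaneM.flipsToPlane (by simp [PlaneM]) _
  obtain ⟨a, b, habM, hmin⟩ := exists_mk_mem_forall_le hne fun x y => (leftOf P x y).card
  have haP := hM.left_mem habM
  have peel {M' : Set (Sym2 Pt)} {c : Pt} (hM' : IsPM P M') (hacM : s(a, c) ∈ M')
      (hside : ∀ x ∈ P, x ≠ a → x ≠ c → orient a c x < 0) :
      FlipsToPlane M' ((P.card - 2) / 2 - 1) := by
    have hsub : (P.erase a).erase c ⊂ P :=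
      (Finset.erase_subset _ _).trans_ssubset (Finset.erase_ssubset haP)
    have hcard : ((P.erase a).erase c).card = P.card - 2 := by
      rw [Finset.card_erase_of_mem (Finset.mem_erase.mpr ⟨(hM'.ne_of_mem hacM).symm,
        hM'.right_mem hacM⟩), Finset.card_erase_of_mem haP, Nat.sub_sub]
    refine .of_hull_edge hM' hacM hside ?_
    simpa only [hcard] using ih _ hsub (hcv.mono (Finset.coe_subset.mpr hsub.subset))
      (hM'.diff_edge hacM)
  obtain ⟨c, hcP, rfl | hc0, hside⟩ := hcv.exists_hull_edge haP (hM.right_mem habM)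
    (hM.ne_of_mem habM)
  · exact (peel hM habM hside).mono (by omega)
  obtain ⟨d, hcdM⟩ := hM.exists_partner hcP
  have hcross := hcv.segCross_of_forall_card_le hM habM hcdM hc0 hmin
  have hflip : Flip M _ := ⟨a, b, c, d, habM, hcdM, hcross, Or.inl rfl⟩
  have h4 : 4 ≤ P.card := by
    obtain ⟨hab, hac, had, hbc, hbd, hcd, -⟩ := hcross
    have hsub : {a, b, c, d} ⊆ P := by
      simp [Finset.insert_subset_iff, haP, hM.right_mem habM, hcP, hM.right_mem hcdM]
    exact (Finset.card_eq_four.mpr ⟨a, b, c, d, hab, hac, had, hbc, hbd, hcd, rfl⟩).symm.le.trans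
      (Finset.card_le_card hsub)
  exact ((peel (hM.of_flip hflip) (by simp) hside).cons hflip).mono (by omega)

theorem stmt6_general (n : ℕ) (P : Finset Pt) (hcard : P.card = n)
    (hcv : ConvexPos ↑P)
    (M : Set (Sym2 Pt)) (hM : IsPM P M) :
    FlipsToPlane M (n / 2 - 1) :=
  hcard ▸ flipsToPlane_of_convexPos P hcv hM

/-- Every perfect matching on `n` points in convex (and general)
position can be transformed into a plane perfect matching by at most `n/2 - 1` flips. -/
theorem stmt6 (n : ℕ) (hn : Even n) (P : Finset Pt) (hcard : P.card = n)
    (hgp : GenPos ↑P) (hcv : ConvexPos ↑P)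
    (M : Set (Sym2 Pt)) (hM : IsPM P M) :
    FlipsToPlane M (n / 2 - 1) :=
  stmt6_general n P hcard hcv M hM
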